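/- Let a ∈ C³[0,R] satisfy a(0)=0 and a'>0 on (0,R). If λ ≤ μ* := ((n-2)/4)·inf_{0<x<R}[(n-1)a''/a + a'''/a'], then problem -u'' - (n-1)(a'/a)u' = λu + |u|^{q-1}u, u'(0)=u(R)=0, q=(n+2)/(n-2), has no nontrivial C² solution. -/

import Mathlib

/-!
Testing the equation with `a^(n-1) (a u' + (n-2)/2 a' u)` gives a Rellich–Pohozaev function `H`
with `H' = a^(n-1) a' u² (λ - (n-2)/4 ((n-1) a''/a + a'''/a'))`, the two terms in
`|u|^(q+1)` cancelling exactly because `q` is the critical exponent. Hence `H' ≤ 0` when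
`λ ≤ μ*`, and since `H(0) = 0` (as `a(0) = 0`) and `H(R) = a(R)^n u'(R)² / 2` (as `u(R) = 0`),
we get `u'(R) = 0`. On every `[ε, R]` the equation is a linear equation for `u` with continuous
coefficients and zero data at `R`, so `u = 0` there by a Gronwall argument, and at `0` by
continuity.
-/

open Set

lemma eqOn_zero_of_abs_deriv_le_of_right_eq_zero {u u' u'' : ℝ → ℝ} {s t C : ℝ}
    (hu : ContinuousOn u (Icc s t)) (hu' : ContinuousOn u' (Icc s t))
    (hdu : ∀ x ∈ Ioo s t, HasDerivAt u (u' x) x) (hdu' : ∀ x ∈ Ioo s t, HasDerivAt u' (u'' x) x)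
    (hbound : ∀ x ∈ Ioo s t, |u'' x| ≤ C * (|u x| + |u' x|))
    (hut : u t = 0) (hu't : u' t = 0) : EqOn u 0 (Icc s t) := by
  -- the weight `exp (K y)` makes the energy `u² + u'²` nondecreasing
  set K := 1 + 3 * |C|
  set E : ℝ → ℝ := fun y => (u y ^ 2 + u' y ^ 2) * Real.exp (K * y)
  have hE : ∀ x ∈ Ioo s t, HasDerivAt E
      ((2 * u x * u' x + 2 * u' x * u'' x + K * (u x ^ 2 + u' x ^ 2)) * Real.exp (K * x)) x := by
    intro x hx
    have hexp : HasDerivAt (fun y => Real.exp (K * y)) (Real.exp (K * x) * K) x :=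
      (Real.hasDerivAt_exp _).comp x ((hasDerivAt_id x).const_mul K |>.congr_deriv (mul_one K))
    refine ((((hdu x hx).pow 2).add ((hdu' x hx).pow 2)).mul hexp).congr_deriv ?_
    simp only [Pi.add_apply, Pi.pow_apply]
    ring
  have hE_nonneg : ∀ x ∈ Ioo s t,
      0 ≤ 2 * u x * u' x + 2 * u' x * u'' x + K * (u x ^ 2 + u' x ^ 2) := by
    intro x hx
    have h₁ : |u'' x| ≤ |C| * (|u x| + |u' x|) :=
      (hbound x hx).trans (by gcongr; exact le_abs_self C)
    have h₂ : -(|u' x| * |u'' x|) ≤ u' x * u'' x := by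
      rw [← abs_mul]; exact neg_abs_le _
    have h₃ : |u' x| * |u'' x| ≤ |u' x| * (|C| * (|u x| + |u' x|)) :=
      mul_le_mul_of_nonneg_left h₁ (abs_nonneg _)
    nlinarith [sq_abs (u x), sq_abs (u' x), sq_nonneg (|u x| - |u' x|), sq_nonneg (u x + u' x),
      abs_nonneg C, mul_nonneg (abs_nonneg C) (sq_nonneg (|u x| - |u' x|))]
  have hmono : MonotoneOn E (Icc s t) := by
    refine monotoneOn_of_deriv_nonneg (convex_Icc s t) ?_ ?_ ?_
    · exact ((hu.pow 2).add (hu'.pow 2)).mul (by fun_prop)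
    · rw [interior_Icc]; exact fun x hx => (hE x hx).differentiableAt.differentiableWithinAt
    · rw [interior_Icc]; intro x hx
      rw [(hE x hx).deriv]; exact mul_nonneg (hE_nonneg x hx) (Real.exp_pos _).le
  intro x hx
  have hEx : E x ≤ 0 := by
    simpa [E, hut, hu't] using hmono hx (right_mem_Icc.2 (hx.1.trans hx.2)) hx.2
  have : u x ^ 2 + u' x ^ 2 ≤ 0 := nonpos_of_mul_nonpos_left hEx (Real.exp_pos _)
  exact pow_eq_zero_iff two_ne_zero |>.1 (by nlinarith [sq_nonneg (u x), sq_nonneg (u' x)])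

lemma eqOn_zero_of_linear_ode_of_right_eq_zero {b c u u' u'' : ℝ → ℝ} {s t : ℝ}
    (hb : ContinuousOn b (Icc s t)) (hc : ContinuousOn c (Icc s t))
    (hu : ContinuousOn u (Icc s t)) (hu' : ContinuousOn u' (Icc s t))
    (hdu : ∀ x ∈ Ioo s t, HasDerivAt u (u' x) x) (hdu' : ∀ x ∈ Ioo s t, HasDerivAt u' (u'' x) x)
    (hode : ∀ x ∈ Ioo s t, u'' x = b x * u' x + c x * u x)
    (hut : u t = 0) (hu't : u' t = 0) : EqOn u 0 (Icc s t) := by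
  obtain ⟨B, hB⟩ := isCompact_Icc.exists_bound_of_continuousOn hb
  obtain ⟨C, hC⟩ := isCompact_Icc.exists_bound_of_continuousOn hc
  refine eqOn_zero_of_abs_deriv_le_of_right_eq_zero (C := |B| + |C|) hu hu' hdu hdu' ?_ hut hu't
  intro x hx
  have hbx : |b x| ≤ |B| := (hB x (Ioo_subset_Icc_self hx)).trans (le_abs_self B)
  have hcx : |c x| ≤ |C| := (hC x (Ioo_subset_Icc_self hx)).trans (le_abs_self C)
  calc |u'' x| ≤ |b x| * |u' x| + |c x| * |u x| := by
        rw [hode x hx, ← abs_mul, ← abs_mul]; exact abs_add_le _ _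
    _ ≤ |B| * |u' x| + |C| * |u x| := by gcongr
    _ ≤ (|B| + |C|) * (|u x| + |u' x|) := by
        nlinarith [abs_nonneg B, abs_nonneg C, abs_nonneg (u x), abs_nonneg (u' x)]

lemma hasDerivAt_derivWithin_Icc {f : ℝ → ℝ} {s t x : ℝ} {k : WithTop ℕ∞}
    (hf : ContDiffOn ℝ k f (Icc s t)) (hk : k ≠ 0) (hx : x ∈ Ioo s t) :
    HasDerivAt f (derivWithin f (Icc s t) x) x :=
  ((hf.differentiableOn hk x (Ioo_subset_Icc_self hx)).hasDerivWithinAt).hasDerivAt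
    (Icc_mem_nhds hx.1 hx.2)

lemma eqOn_deriv_derivWithin_Icc {f g : ℝ → ℝ} {s t : ℝ} (h : EqOn f g (Ioo s t)) :
    EqOn (deriv f) (derivWithin g (Icc s t)) (Ioo s t) := fun _ hx =>
  (h.deriv isOpen_Ioo hx).trans (derivWithin_of_mem_nhds (Icc_mem_nhds hx.1 hx.2)).symm

/-- The derivatives `a'`, `a''`, `u'` are arguments so that one-sided derivatives can be used at
the endpoints, where `deriv` is junk. -/
noncomputable def pohozaev (n : ℕ) (lam q : ℝ) (a a' a'' u u' : ℝ → ℝ) (x : ℝ) : ℝ :=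
  a x ^ (n - 1) * (a x * (u' x ^ 2 / 2 + lam * u x ^ 2 / 2 + |u x| ^ (q + 1) / (q + 1))
    + (n - 2 : ℝ) / 2 * a' x * u x * u' x - (n - 2 : ℝ) / 4 * a'' x * u x ^ 2)

lemma hasDerivAt_pohozaev {n : ℕ} {lam q x : ℝ} {a a' a'' a''' u u' u'' : ℝ → ℝ}
    (hn : 2 < n) (hq : q = ((n : ℝ) + 2) / ((n : ℝ) - 2))
    (ha : HasDerivAt a (a' x) x) (ha' : HasDerivAt a' (a'' x) x)
    (ha'' : HasDerivAt a'' (a''' x) x) (hu : HasDerivAt u (u' x) x)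
    (hu' : HasDerivAt u' (u'' x) x) (hax : a x ≠ 0) (ha'x : a' x ≠ 0)
    (hode : -u'' x - ((n : ℝ) - 1) * (a' x / a x) * u' x = lam * u x + |u x| ^ (q - 1) * u x) :
    HasDerivAt (pohozaev n lam q a a' a'' u u')
      (a x ^ (n - 1) * a' x * u x ^ 2 *
        (lam - ((n : ℝ) - 2) / 4 * (((n : ℝ) - 1) * a'' x / a x + a''' x / a' x))) x := by
  obtain ⟨k, rfl⟩ : ∃ k, n = k + 3 := ⟨n - 3, by omega⟩
  have hq1' : q + 1 = (2 * k + 6) / (k + 1) := by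
    rw [hq]; push_cast
    rw [show (k : ℝ) + 3 - 2 = k + 1 by ring]
    field_simp; ring
  have hq1 : 1 < q := by
    have : 2 < q + 1 := by rw [hq1', lt_div_iff₀ (by positivity)]; linarith
    linarith
  have hF : HasDerivAt (fun y => |u y| ^ (q + 1) / (q + 1)) (|u x| ^ (q - 1) * u x * u' x) x := by
    refine (((hasDerivAt_abs_rpow (u x) (by linarith)).comp x hu).div_const (q + 1)).congr_deriv ?_
    rw [show q + 1 - 2 = q - 1 by ring]
    field_simp
  have hsq : |u x| ^ (q + 1) = |u x| ^ (q - 1) * u x ^ 2 := by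
    rw [show q + 1 = (q - 1) + 2 by ring, Real.rpow_add' (abs_nonneg _) (by linarith),
      Real.rpow_two, sq_abs]
  have hu'' : u'' x = -(((k : ℝ) + 2) * (a' x / a x)) * u' x - lam * u x
      - |u x| ^ (q - 1) * u x := by
    push_cast at hode; linear_combination -hode
  unfold pohozaev
  rw [show k + 3 - 1 = k + 2 by omega]
  refine ((ha.pow (k + 2)).mul (((ha.mul ((((hu'.pow 2).div_const 2).add
      (((hu.pow 2).const_mul lam).div_const 2)).add hF)).add
      (((ha'.const_mul _).mul hu).mul hu')).sub ((ha''.const_mul _).mul (hu.pow 2)))).congr_deriv ?_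
  simp only [Pi.mul_apply, Pi.add_apply, Pi.sub_apply, Pi.pow_apply]
  rw [hu'', hsq, hq1', show k + 2 - 1 = k + 1 by omega]
  push_cast
  field_simp
  ring

section Interval

variable {s t : ℝ}

local notation:max "𝒟" f:max => derivWithin f (Icc s t)

lemma pohozaev_antitoneOn {n : ℕ} {lam q : ℝ} {a u : ℝ → ℝ} (hst : s < t) (hn : 2 < n)
    (hq : q = ((n : ℝ) + 2) / ((n : ℝ) - 2))
    (ha : ContDiffOn ℝ 3 a (Icc s t)) (hu : ContDiffOn ℝ 2 u (Icc s t))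
    (hapos : ∀ x ∈ Ioo s t, 0 < a x) (ha'pos : ∀ x ∈ Ioo s t, 0 < deriv a x)
    (hode : ∀ x ∈ Ioo s t, -(deriv (deriv u) x) - ((n : ℝ) - 1) * (deriv a x / a x) * deriv u x =
      lam * u x + |u x| ^ (q - 1) * u x)
    (hlam : ∀ x ∈ Ioo s t, lam ≤ ((n : ℝ) - 2) / 4 *
      (((n : ℝ) - 1) * deriv (deriv a) x / a x + deriv (deriv (deriv a)) x / deriv a x)) :
    AntitoneOn (pohozaev n lam q a (𝒟 a) (𝒟 (𝒟 a)) u (𝒟 u)) (Icc s t) := by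
  have hI := uniqueDiffOn_Icc hst
  have ha' : ContDiffOn ℝ 2 (𝒟 a) (Icc s t) := ha.derivWithin hI (by norm_num)
  have ha'' : ContDiffOn ℝ 1 (𝒟 (𝒟 a)) (Icc s t) := ha'.derivWithin hI (by norm_num)
  have hu' : ContDiffOn ℝ 1 (𝒟 u) (Icc s t) := hu.derivWithin hI (by norm_num)
  have hDa := eqOn_deriv_derivWithin_Icc (eqOn_refl a (Ioo s t))
  have hD2a := eqOn_deriv_derivWithin_Icc hDa
  have hD3a := eqOn_deriv_derivWithin_Icc hD2a
  have hDu := eqOn_deriv_derivWithin_Icc (eqOn_refl u (Ioo s t))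
  have hD2u := eqOn_deriv_derivWithin_Icc hDu
  have hderiv : ∀ x ∈ Ioo s t, HasDerivAt (pohozaev n lam q a (𝒟 a) (𝒟 (𝒟 a)) u (𝒟 u))
      (a x ^ (n - 1) * deriv a x * u x ^ 2 * (lam - ((n : ℝ) - 2) / 4 *
        (((n : ℝ) - 1) * deriv (deriv a) x / a x + deriv (deriv (deriv a)) x / deriv a x))) x := by
    intro x hx
    rw [hDa hx, hD2a hx, hD3a hx]
    refine hasDerivAt_pohozaev hn hq (hasDerivAt_derivWithin_Icc ha (by norm_num) hx)
      (hasDerivAt_derivWithin_Icc ha' (by norm_num) hx)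
      (hasDerivAt_derivWithin_Icc ha'' (by norm_num) hx)
      (hasDerivAt_derivWithin_Icc hu (by norm_num) hx)
      (hasDerivAt_derivWithin_Icc hu' (by norm_num) hx)
      (hapos x hx).ne' (hDa hx ▸ ha'pos x hx).ne' ?_
    simpa only [hD2u hx, hDu hx, hDa hx] using hode x hx
  have hq1 : 0 ≤ q + 1 := by
    have : (2 : ℝ) < n := by exact_mod_cast hn
    rw [hq]; positivity
  refine antitoneOn_of_deriv_nonpos (convex_Icc s t) ?_ ?_ ?_
  · have := ha.continuousOn; have := ha'.continuousOn; have := ha''.continuousOn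
    have := hu.continuousOn; have := hu'.continuousOn
    unfold pohozaev
    fun_prop (disch := intros; exact Or.inr hq1)
  · rw [interior_Icc]; exact fun x hx => (hderiv x hx).differentiableAt.differentiableWithinAt
  · rw [interior_Icc]; intro x hx
    rw [(hderiv x hx).deriv]
    exact mul_nonpos_of_nonneg_of_nonpos (by have := hapos x hx; have := ha'pos x hx; positivity)
      (sub_nonpos.2 (hlam x hx))

lemma eq_zero_of_antitoneOn_pohozaev {n : ℕ} {lam q : ℝ} {a a' a'' u u' : ℝ → ℝ}
    (hH : AntitoneOn (pohozaev n lam q a a' a'' u u') (Icc s t)) (hst : s ≤ t) (hn : 2 ≤ n)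
    (hq : q + 1 ≠ 0) (has : a s = 0) (hat : 0 < a t) (hut : u t = 0) : u' t = 0 := by
  have h := hH (left_mem_Icc.2 hst) (right_mem_Icc.2 hst) hst
  have hn1 : n - 1 ≠ 0 := by omega
  simp only [pohozaev, has, hut, zero_pow hn1, zero_pow two_ne_zero, abs_zero,
    Real.zero_rpow hq, zero_mul, mul_zero, zero_div, add_zero, sub_zero] at h
  have : 0 < a t ^ (n - 1) * a t := by positivity
  exact pow_eq_zero_iff two_ne_zero |>.1 (le_antisymm (by nlinarith) (sq_nonneg _))

lemma eqOn_zero_of_ode_of_right_eq_zero {c lam q : ℝ} {a u : ℝ → ℝ} (hst : s < t) (hq : 1 ≤ q)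
    (ha : ContDiffOn ℝ 1 a (Icc s t)) (hu : ContDiffOn ℝ 2 u (Icc s t))
    (hapos : ∀ x ∈ Ioc s t, 0 < a x)
    (hode : ∀ x ∈ Ioo s t, -(deriv (deriv u) x) - c * (deriv a x / a x) * deriv u x =
      lam * u x + |u x| ^ (q - 1) * u x)
    (hut : u t = 0) (hu't : 𝒟 u t = 0) : EqOn u 0 (Icc s t) := by
  have hI := uniqueDiffOn_Icc hst
  have ha' : ContinuousOn (𝒟 a) (Icc s t) := ha.continuousOn_derivWithin hI le_rfl
  have hu' : ContDiffOn ℝ 1 (𝒟 u) (Icc s t) := hu.derivWithin hI (by norm_num)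
  have hDa := eqOn_deriv_derivWithin_Icc (eqOn_refl a (Ioo s t))
  have hDu := eqOn_deriv_derivWithin_Icc (eqOn_refl u (Ioo s t))
  have hD2u := eqOn_deriv_derivWithin_Icc hDu
  -- on `[x, t]` the nonlinearity is absorbed into the continuous coefficient `-(λ + |u|^(q-1))`
  have hIoc : EqOn u 0 (Ioc s t) := by
    intro x hx
    have hsub : Icc x t ⊆ Icc s t := Icc_subset_Icc hx.1.le le_rfl
    have hsub' : Ioo x t ⊆ Ioo s t := Ioo_subset_Ioo hx.1.le le_rfl
    refine eqOn_zero_of_linear_ode_of_right_eq_zero (b := fun y => -(c * (𝒟 a y / a y)))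
      (c := fun y => -(lam + |u y| ^ (q - 1))) ?_ ?_ (hu.continuousOn.mono hsub)
      (hu'.continuousOn.mono hsub)
      (fun y hy => hasDerivAt_derivWithin_Icc hu (by norm_num) (hsub' hy))
      (fun y hy => hasDerivAt_derivWithin_Icc hu' (by norm_num) (hsub' hy)) ?_ hut hu't
      (left_mem_Icc.2 hx.2)
    · exact (continuousOn_const.mul ((ha'.mono hsub).div (ha.continuousOn.mono hsub)
        fun y hy => (hapos y ⟨hx.1.trans_le hy.1, hy.2⟩).ne')).neg
    · exact (((hu.continuousOn.mono hsub).abs.rpow_const fun _ _ => Or.inr (by linarith)).const_add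
        lam).neg
    · intro y hy
      have hy' := hsub' hy
      have := hode y hy'
      rw [hD2u hy', hDu hy', hDa hy'] at this
      linear_combination -this
  exact hIoc.of_subset_closure hu.continuousOn continuousOn_const Ioc_subset_Icc_self
    (closure_Ioc hst.ne).ge

end Interval

theorem stmt_9 (R : ℝ) (hR : 0 < R) (n : ℕ) (hn : 2 < n)
    (q : ℝ) (hq : q = ((n : ℝ) + 2) / ((n : ℝ) - 2))
    (a : ℝ → ℝ) (ha : ContDiffOn ℝ 3 a (Set.Icc 0 R))
    (ha0 : a 0 = 0)
    (ha'pos : ∀ x ∈ Set.Ioo (0:ℝ) R, 0 < deriv a x)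
    (mu : ℝ)
    (hmu : IsGLB {y : ℝ | ∃ x ∈ Set.Ioo (0:ℝ) R,
      y = ((n : ℝ) - 1) * deriv (deriv a) x / a x +
        deriv (deriv (deriv a)) x / deriv a x} mu)
    (lam : ℝ) (hlam : lam ≤ ((n : ℝ) - 2) / 4 * mu) :
    ¬ ∃ u : ℝ → ℝ, ContDiffOn ℝ 2 u (Set.Icc 0 R) ∧
      deriv u 0 = 0 ∧ u R = 0 ∧
      (∀ x ∈ Set.Ioo (0:ℝ) R,
        -(deriv (deriv u) x) - ((n : ℝ) - 1) * (deriv a x / a x) * deriv u x =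
          lam * u x + |u x| ^ (q - 1) * u x) ∧
      (∃ x ∈ Set.Icc (0:ℝ) R, u x ≠ 0) := by
  rintro ⟨u, hu, -, huR, hode, x₀, hx₀, hux₀⟩
  have hn' : (2 : ℝ) < n := by exact_mod_cast hn
  have hq1 : 1 < q := by rw [hq, one_lt_div (by linarith)]; linarith
  have hapos : ∀ x ∈ Ioc 0 R, 0 < a x := fun x hx => ha0 ▸
    strictMonoOn_of_deriv_pos (convex_Icc 0 R) ha.continuousOn (by rwa [interior_Icc])
      (left_mem_Icc.2 hR.le) (Ioc_subset_Icc_self hx) hx.1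
  have hlam' : ∀ x ∈ Ioo 0 R, lam ≤ ((n : ℝ) - 2) / 4 *
      (((n : ℝ) - 1) * deriv (deriv a) x / a x + deriv (deriv (deriv a)) x / deriv a x) :=
    fun x hx => hlam.trans (mul_le_mul_of_nonneg_left (hmu.1 ⟨x, hx, rfl⟩) (by linarith))
  have hanti := pohozaev_antitoneOn hR hn hq ha hu (fun x hx => hapos x (Ioo_subset_Ioc_self hx))
    ha'pos hode hlam'
  have hu'R : derivWithin u (Icc 0 R) R = 0 := eq_zero_of_antitoneOn_pohozaev hanti hR.le hn.le
    (by linarith) ha0 (hapos R ⟨hR, le_rfl⟩) huR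
  exact hux₀ (eqOn_zero_of_ode_of_right_eq_zero hR hq1.le (ha.of_le (by norm_num)) hu hapos hode
    huR hu'R hx₀)
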